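/- Let f: S → ℝ be layer-wise (L⁰, L¹)-smooth. Let X = [X_1,…,X_p] ∈ S, let M = [M_1,…,M_p] ∈ S be arbitrary, let t_i > 0, and suppose X⁺ = [X⁺_1,…,X⁺_p] is such that, for each i, X⁺_i minimizes X_i ↦ ⟨M_i, X_i⟩_{(i)} over the ball {X_i : ‖X_i − X_i‖_{(i)} ≤ t_i} centered at X_i. Then f(X⁺) ≤ f(X) + Σ_{i=1}^p [ −t_i ‖∇_i f(X)‖_{(i)⋆} + 2 t_i ‖M_i − ∇_i f(X)‖_{(i)⋆} + ((L⁰_i + L¹_i ‖∇_i f(X)‖_{(i)⋆})/2) t_i² ]. -/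

import Mathlib

/-! Along the segment from `X` to `Y`, layer-wise smoothness lets the directional derivative of
`f` grow at most linearly, which gives the descent lemma
`f Y ≤ f X + ∑ᵢ (⟨∇ᵢf(X), Yᵢ - Xᵢ⟩ + (L⁰ᵢ + L¹ᵢ‖∇ᵢf(X)‖⋆)/2 ‖Yᵢ - Xᵢ‖²)`.
For the step `X⁺ᵢ - Xᵢ` of length at most `tᵢ` chosen by the linear minimization oracle,
`⟨Mᵢ, X⁺ᵢ - Xᵢ⟩ ≤ -tᵢ‖Mᵢ‖⋆`; replacing `Mᵢ` by `∇ᵢf(X)` costs `tᵢ‖Mᵢ - ∇ᵢf(X)‖⋆` twice, once in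
the inner product and once in `‖Mᵢ‖⋆ ≥ ‖∇ᵢf(X)‖⋆ - ‖Mᵢ - ∇ᵢf(X)‖⋆`. -/

noncomputable section
open Finset

/-- Trace inner product `⟨A,B⟩ = tr(AᵀB)` on `m×n` real matrices (viewed as functions). -/
def tip {m n : ℕ} (A B : Fin m → Fin n → ℝ) : ℝ := ∑ a, ∑ b, A a b * B a b

/-- An arbitrary norm on the space of `m×n` real matrices. -/
structure MatNorm (m n : ℕ) where
  N : (Fin m → Fin n → ℝ) → ℝ
  pos : ∀ A, A ≠ 0 → 0 < N A
  zero : N 0 = 0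
  smul : ∀ (c : ℝ) (A : Fin m → Fin n → ℝ), N (c • A) = |c| * N A
  triangle : ∀ A B, N (A + B) ≤ N A + N B

/-- The dual norm `‖A‖⋆ = sup_{‖Z‖ ≤ 1} ⟨A, Z⟩`. -/
def MatNorm.dual {m n : ℕ} (nn : MatNorm m n) (A : Fin m → Fin n → ℝ) : ℝ :=
  sSup {r : ℝ | ∃ Z, nn.N Z ≤ 1 ∧ r = tip A Z}

/-- `Y` minimizes the linear functional `Z ↦ ⟨G, Z⟩` over the ball of radius `t`
centered at `C` (the linear minimization oracle). -/
def IsLMOMin {m n : ℕ} (nn : MatNorm m n) (G C : Fin m → Fin n → ℝ) (t : ℝ)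
    (Y : Fin m → Fin n → ℝ) : Prop :=
  nn.N (Y - C) ≤ t ∧ ∀ Z, nn.N (Z - C) ≤ t → tip G Y ≤ tip G Z

section TraceInner

variable {m n : ℕ} (A B C : Fin m → Fin n → ℝ)

theorem tip_add_left : tip (A + B) C = tip A C + tip B C := by
  simp [tip, add_mul, sum_add_distrib]

theorem tip_sub_left : tip (A - B) C = tip A C - tip B C := by
  simp [tip, sub_mul, sum_sub_distrib]

theorem tip_add_right : tip A (B + C) = tip A B + tip A C := by
  simp [tip, mul_add, sum_add_distrib]

theorem tip_sub_right : tip A (B - C) = tip A B - tip A C := by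
  simp [tip, mul_sub, sum_sub_distrib]

theorem tip_neg_left : tip (-A) B = -tip A B := by
  simp [tip]

theorem tip_smul_right (c : ℝ) : tip A (c • B) = c * tip A B := by
  simp only [tip, Pi.smul_apply, smul_eq_mul, mul_sum]
  exact sum_congr rfl fun a _ => sum_congr rfl fun b _ => by ring

end TraceInner

namespace MatNorm

variable {m n : ℕ} (nn : MatNorm m n)

theorem N_nonneg (A : Fin m → Fin n → ℝ) : 0 ≤ nn.N A := by
  rcases eq_or_ne A 0 with rfl | hA
  · exact nn.zero.ge
  · exact (nn.pos A hA).le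

theorem N_eq_zero_iff {A : Fin m → Fin n → ℝ} : nn.N A = 0 ↔ A = 0 :=
  ⟨fun h => by_contra fun hA => (nn.pos A hA).ne' h, fun h => h ▸ nn.zero⟩

theorem N_neg (A : Fin m → Fin n → ℝ) : nn.N (-A) = nn.N A := by
  simpa using nn.smul (-1) A

theorem N_sub_rev (A B : Fin m → Fin n → ℝ) : nn.N (A - B) = nn.N (B - A) := by
  rw [← neg_sub, N_neg]

-- A type synonym, so that `nn.N` rather than the sup norm of the function space is its norm.
def Space (_ : MatNorm m n) : Type := Fin m → Fin n → ℝ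

instance : AddCommGroup nn.Space := inferInstanceAs (AddCommGroup (Fin m → Fin n → ℝ))

instance : Module ℝ nn.Space := inferInstanceAs (Module ℝ (Fin m → Fin n → ℝ))

instance : FiniteDimensional ℝ nn.Space :=
  inferInstanceAs (FiniteDimensional ℝ (Fin m → Fin n → ℝ))

instance : Norm nn.Space := ⟨nn.N⟩

theorem normedSpaceCore : NormedSpace.Core ℝ nn.Space where
  norm_nonneg := nn.N_nonneg
  norm_smul c A := by rw [Real.norm_eq_abs]; exact nn.smul c A
  norm_triangle := nn.triangle
  norm_eq_zero_iff _ := nn.N_eq_zero_iff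

instance : NormedAddCommGroup nn.Space := .ofCore nn.normedSpaceCore

instance : NormedSpace ℝ nn.Space := .ofCore nn.normedSpaceCore

def tipLeft (A : Fin m → Fin n → ℝ) : nn.Space →ₗ[ℝ] ℝ where
  toFun := tip A
  map_add' := tip_add_right A
  map_smul' c B := tip_smul_right A B c

theorem exists_tip_le_mul (A : Fin m → Fin n → ℝ) :
    ∃ C, ∀ Z, tip A Z ≤ C * nn.N Z := by
  let φ := LinearMap.toContinuousLinearMap (nn.tipLeft A)
  exact ⟨‖φ‖, fun Z => (le_abs_self _).trans (φ.le_opNorm (Z : nn.Space))⟩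

theorem dual_bddAbove (A : Fin m → Fin n → ℝ) :
    BddAbove {r : ℝ | ∃ Z, nn.N Z ≤ 1 ∧ r = tip A Z} := by
  obtain ⟨C, hC⟩ := nn.exists_tip_le_mul A
  refine ⟨max C 0, ?_⟩
  rintro _ ⟨Z, hZ, rfl⟩
  calc tip A Z ≤ C * nn.N Z := hC Z
    _ ≤ max C 0 * nn.N Z := by gcongr; exacts [nn.N_nonneg Z, le_max_left C 0]
    _ ≤ max C 0 := mul_le_of_le_one_right (le_max_right C 0) hZ

theorem tip_le_dual {A Z : Fin m → Fin n → ℝ} (hZ : nn.N Z ≤ 1) : tip A Z ≤ nn.dual A :=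
  le_csSup (nn.dual_bddAbove A) ⟨Z, hZ, rfl⟩

theorem dual_le {A : Fin m → Fin n → ℝ} {r : ℝ} (h : ∀ Z, nn.N Z ≤ 1 → tip A Z ≤ r) :
    nn.dual A ≤ r :=
  csSup_le ⟨0, 0, nn.zero.trans_le zero_le_one, by simp [tip]⟩
    (by rintro _ ⟨Z, hZ, rfl⟩; exact h Z hZ)

theorem dual_nonneg (A : Fin m → Fin n → ℝ) : 0 ≤ nn.dual A := by
  simpa [tip] using nn.tip_le_dual (A := A) (nn.zero.trans_le zero_le_one)

theorem tip_le_dual_mul_N (A H : Fin m → Fin n → ℝ) : tip A H ≤ nn.dual A * nn.N H := by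
  rcases eq_or_ne H 0 with rfl | hH
  · simp [tip, nn.zero]
  have hN := nn.pos H hH
  have hunit : nn.N ((nn.N H)⁻¹ • H) ≤ 1 := by
    rw [nn.smul, abs_inv, abs_of_pos hN, inv_mul_cancel₀ hN.ne']
  have := nn.tip_le_dual (A := A) hunit
  rw [tip_smul_right, inv_mul_le_iff₀ hN] at this
  linarith

theorem dual_neg (A : Fin m → Fin n → ℝ) : nn.dual (-A) = nn.dual A := by
  have dual_neg_le (B : Fin m → Fin n → ℝ) : nn.dual (-B) ≤ nn.dual B :=
    nn.dual_le fun Z hZ => by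
      simpa [tip_neg_left, tip] using nn.tip_le_dual (A := B) (Z := -Z) (by rwa [N_neg])
  exact le_antisymm (dual_neg_le A) (by simpa using dual_neg_le (-A))

theorem dual_sub_rev (A B : Fin m → Fin n → ℝ) : nn.dual (A - B) = nn.dual (B - A) := by
  rw [← neg_sub, dual_neg]

theorem dual_add_le (A B : Fin m → Fin n → ℝ) : nn.dual (A + B) ≤ nn.dual A + nn.dual B :=
  nn.dual_le fun Z hZ => by
    rw [tip_add_left]
    exact add_le_add (nn.tip_le_dual hZ) (nn.tip_le_dual hZ)

end MatNorm

namespace IsLMOMin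

variable {m n : ℕ} {nn : MatNorm m n} {M C Y : Fin m → Fin n → ℝ} {t : ℝ}

theorem radius_nonneg (h : IsLMOMin nn M C t Y) : 0 ≤ t :=
  (nn.N_nonneg _).trans h.1

theorem tip_sub_le (h : IsLMOMin nn M C t Y) : tip M (Y - C) ≤ -t * nn.dual M := by
  have ht := h.radius_nonneg
  have hball : ∀ Z, nn.N Z ≤ 1 → t * tip M Z ≤ -tip M (Y - C) := by
    intro Z hZ
    have hW : nn.N ((C - t • Z) - C) ≤ t := by
      rw [sub_sub_cancel_left, nn.N_neg, nn.smul, abs_of_nonneg ht]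
      exact mul_le_of_le_one_right ht hZ
    have := h.2 _ hW
    rw [tip_sub_right, tip_smul_right] at this
    rw [tip_sub_right]
    linarith
  rcases ht.eq_or_lt with rfl | htpos
  · simpa [tip] using hball 0 (nn.zero.trans_le zero_le_one)
  · have := nn.dual_le (r := -tip M (Y - C) / t) fun Z hZ => by
      rw [le_div_iff₀ htpos]; linarith [hball Z hZ]
    rw [le_div_iff₀ htpos] at this
    linarith

theorem tip_sub_le_add_dual_sub (h : IsLMOMin nn M C t Y) (G : Fin m → Fin n → ℝ) :
    tip G (Y - C) ≤ -t * nn.dual G + 2 * t * nn.dual (M - G) := by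
  have ht := h.radius_nonneg
  have hsplit : tip G (Y - C) = tip M (Y - C) + tip (G - M) (Y - C) := by
    rw [← tip_add_left, add_sub_cancel]
  have herr : tip (G - M) (Y - C) ≤ nn.dual (M - G) * t := by
    rw [← nn.dual_sub_rev]
    exact (nn.tip_le_dual_mul_N _ _).trans
      (mul_le_mul_of_nonneg_left h.1 (nn.dual_nonneg _))
  have htri : nn.dual G ≤ nn.dual M + nn.dual (M - G) := by
    simpa [nn.dual_sub_rev G M] using nn.dual_add_le M (G - M)
  linarith [h.tip_sub_le, mul_le_mul_of_nonneg_left htri ht]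

end IsLMOMin

theorem le_add_add_half_of_hasDerivAt_le {φ φ' : ℝ → ℝ} {a b : ℝ}
    (hφ : ∀ s, HasDerivAt φ (φ' s) s) (hφ' : ∀ s ∈ Set.Ico (0 : ℝ) 1, φ' s ≤ a + b * s) :
    φ 1 ≤ φ 0 + a + b / 2 := by
  have hB (s : ℝ) : HasDerivAt (fun s => φ 0 + a * s + b / 2 * s ^ 2) (a + b * s) s :=
    ((((hasDerivAt_id' s).const_mul a).const_add (φ 0)).add
      ((hasDerivAt_pow 2 s).const_mul (b / 2))).congr_deriv (by norm_num; ring)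
  have := image_le_of_deriv_right_le_deriv_boundary (a := 0) (b := 1)
    (fun s _ => (hφ s).continuousAt.continuousWithinAt) (fun s _ => (hφ s).hasDerivWithinAt)
    (by simp) (fun s _ => (hB s).continuousAt.continuousWithinAt)
    (fun s _ => (hB s).hasDerivWithinAt) hφ' (Set.right_mem_Icc.2 zero_le_one)
  simpa using this

def LayerwiseSmooth {p : ℕ} {m n : Fin p → ℕ} (nn : ∀ i, MatNorm (m i) (n i))
    (g : (∀ i, Fin (m i) → Fin (n i) → ℝ) → ∀ i, Fin (m i) → Fin (n i) → ℝ)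
    (L0 L1 : Fin p → ℝ) : Prop :=
  ∀ i X Y, (nn i).dual (g X i - g Y i)
    ≤ (L0 i + L1 i * (nn i).dual (g X i)) * (nn i).N (X i - Y i)

namespace LayerwiseSmooth

variable {p : ℕ} {m n : Fin p → ℕ} {nn : ∀ i, MatNorm (m i) (n i)}
  {g : (∀ i, Fin (m i) → Fin (n i) → ℝ) → ∀ i, Fin (m i) → Fin (n i) → ℝ} {L0 L1 : Fin p → ℝ}

theorem tip_le (hg : LayerwiseSmooth nn g L0 L1) (i : Fin p)
    (X Z : ∀ i, Fin (m i) → Fin (n i) → ℝ) (H : Fin (m i) → Fin (n i) → ℝ) :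
    tip (g Z i) H ≤ tip (g X i) H
      + (L0 i + L1 i * (nn i).dual (g X i)) * (nn i).N (Z i - X i) * (nn i).N H := by
  have hsplit : tip (g Z i) H = tip (g X i) H + tip (g Z i - g X i) H := by
    rw [tip_sub_left]; ring
  rw [hsplit, (nn i).N_sub_rev]
  gcongr
  calc tip (g Z i - g X i) H ≤ (nn i).dual (g X i - g Z i) * (nn i).N H := by
        rw [(nn i).dual_sub_rev]; exact (nn i).tip_le_dual_mul_N _ _
    _ ≤ _ := mul_le_mul_of_nonneg_right (hg i X Z) ((nn i).N_nonneg H)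

theorem descent_lemma {f : (∀ i, Fin (m i) → Fin (n i) → ℝ) → ℝ} (hf : Differentiable ℝ f)
    (hgrad : ∀ X H, fderiv ℝ f X H = ∑ i, tip (g X i) (H i))
    (hg : LayerwiseSmooth nn g L0 L1) (X Y : ∀ i, Fin (m i) → Fin (n i) → ℝ) :
    f Y ≤ f X + ∑ i, (tip (g X i) (Y i - X i)
      + (L0 i + L1 i * (nn i).dual (g X i)) / 2 * (nn i).N (Y i - X i) ^ 2) := by
  set D := Y - X
  have hderiv (s : ℝ) : HasDerivAt (fun s => f (X + s • D))
      (∑ i, tip (g (X + s • D) i) (D i)) s := by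
    rw [← hgrad]
    exact (hf _).hasFDerivAt.comp_hasDerivAt s
      (by simpa using ((hasDerivAt_id s).smul_const D).const_add X)
  have hslope : ∀ s ∈ Set.Ico (0 : ℝ) 1, ∑ i, tip (g (X + s • D) i) (D i)
      ≤ ∑ i, tip (g X i) (D i)
        + (∑ i, (L0 i + L1 i * (nn i).dual (g X i)) * (nn i).N (D i) ^ 2) * s := by
    intro s hs
    rw [sum_mul, ← sum_add_distrib]
    refine sum_le_sum fun i _ => (hg.tip_le i X _ (D i)).trans_eq ?_
    simp only [Pi.add_apply, Pi.smul_apply, add_sub_cancel_left, (nn i).smul, abs_of_nonneg hs.1]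
    ring
  have := le_add_add_half_of_hasDerivAt_le hderiv hslope
  simp only [zero_smul, add_zero, one_smul, add_sub_cancel, D, Pi.sub_apply] at this
  refine this.trans_eq ?_
  rw [sum_add_distrib, ← add_assoc, sum_div]
  congr 1
  exact sum_congr rfl fun i _ => by ring

end LayerwiseSmooth

theorem stmt_15_general {p : ℕ} {m n : Fin p → ℕ}
    (nn : ∀ i, MatNorm (m i) (n i))
    (f : (∀ i, Fin (m i) → Fin (n i) → ℝ) → ℝ)
    (g : (∀ i, Fin (m i) → Fin (n i) → ℝ) → ∀ i, Fin (m i) → Fin (n i) → ℝ)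
    (hdiff : ContDiff ℝ 1 f)
    (hgrad : ∀ X H, fderiv ℝ f X H = ∑ i, tip (g X i) (H i))
    (L0 L1 : Fin p → ℝ) (hL0 : ∀ i, 0 ≤ L0 i) (hL1 : ∀ i, 0 ≤ L1 i)
    (hsmooth : ∀ i X Y, (nn i).dual (g X i - g Y i)
      ≤ (L0 i + L1 i * (nn i).dual (g X i)) * (nn i).N (X i - Y i))
    (X Xp M : ∀ i, Fin (m i) → Fin (n i) → ℝ)
    (t : Fin p → ℝ)
    (hupd : ∀ i, IsLMOMin (nn i) (M i) (X i) (t i) (Xp i)) :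
    f Xp ≤ f X + ∑ i,
      (-(t i) * (nn i).dual (g X i) + 2 * t i * (nn i).dual (M i - g X i)
        + (L0 i + L1 i * (nn i).dual (g X i)) / 2 * (t i) ^ 2) := by
  refine (LayerwiseSmooth.descent_lemma (hdiff.differentiable one_ne_zero) hgrad hsmooth
    X Xp).trans ?_
  gcongr with i
  · exact (hupd i).tip_sub_le_add_dual_sub (g X i)
  · have := mul_nonneg (hL1 i) ((nn i).dual_nonneg (g X i))
    linarith [hL0 i]
  · exact (nn i).N_nonneg _
  · exact (hupd i).1

/-- One-step descent with an arbitrary search direction `M`: if each `X⁺ᵢ` minimizes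
`⟨Mᵢ, ·⟩` over the ball of radius `tᵢ > 0` centered at `Xᵢ`, then
`f(X⁺) ≤ f(X) + Σᵢ [−tᵢ‖∇ᵢf(X)‖⋆ + 2tᵢ‖Mᵢ − ∇ᵢf(X)‖⋆ + ((L⁰ᵢ + L¹ᵢ‖∇ᵢf(X)‖⋆)/2)tᵢ²]`. -/
theorem stmt_15 {p : ℕ} {m n : Fin p → ℕ}
    (nn : ∀ i, MatNorm (m i) (n i))
    (f : (∀ i, Fin (m i) → Fin (n i) → ℝ) → ℝ)
    (g : (∀ i, Fin (m i) → Fin (n i) → ℝ) → ∀ i, Fin (m i) → Fin (n i) → ℝ)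
    (hdiff : ContDiff ℝ 1 f)
    (hgrad : ∀ X H, fderiv ℝ f X H = ∑ i, tip (g X i) (H i))
    (L0 L1 : Fin p → ℝ) (hL0 : ∀ i, 0 ≤ L0 i) (hL1 : ∀ i, 0 ≤ L1 i)
    (hsmooth : ∀ i X Y, (nn i).dual (g X i - g Y i)
      ≤ (L0 i + L1 i * (nn i).dual (g X i)) * (nn i).N (X i - Y i))
    (X Xp M : ∀ i, Fin (m i) → Fin (n i) → ℝ)
    (t : Fin p → ℝ) (ht : ∀ i, 0 < t i)
    (hupd : ∀ i, IsLMOMin (nn i) (M i) (X i) (t i) (Xp i)) :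
    f Xp ≤ f X + ∑ i,
      (-(t i) * (nn i).dual (g X i) + 2 * t i * (nn i).dual (M i - g X i)
        + (L0 i + L1 i * (nn i).dual (g X i)) / 2 * (t i) ^ 2) :=
  stmt_15_general nn f g hdiff hgrad L0 L1 hL0 hL1 hsmooth X Xp M t hupd
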